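/- arXiv:2506.20872 — 3 statements merged into one kernel-verified Lean document; each statement's English description precedes it below -/
import Mathlib

section
/- For any two location parameters μ₁, μ₂ ∈ ℝ, scale b > 0, and any point x ∈ ℝ, the ratio of the Laplace densities satisfies p_{μ₁,b}(x) ≤ exp(|μ₁ − μ₂|/b) · p_{μ₂,b}(x), where p_{μ,b}(x) = (1/(2b)) · exp(−|x − μ|/b). -/
open Real

lemma neg_abs_sub_div_le_add {μ₁ μ₂ b : ℝ} (hb : 0 < b) (x : ℝ) :
    -|x - μ₁| / b ≤ |μ₁ - μ₂| / b + -|x - μ₂| / b := by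
  rw [← add_div, div_le_div_iff_of_pos_right hb]
  linarith [abs_sub_le x μ₁ μ₂, abs_sub_comm μ₁ μ₂]

lemma exp_neg_abs_sub_div_le {μ₁ μ₂ b : ℝ} (hb : 0 < b) (x : ℝ) :
    exp (-|x - μ₁| / b) ≤ exp (|μ₁ - μ₂| / b) * exp (-|x - μ₂| / b) := by
  rw [← exp_add]
  exact exp_le_exp.mpr (neg_abs_sub_div_le_add hb x)

/-- Pointwise density-ratio bound for Laplace densities with the same scale. -/
theorem laplace_density_ratio_bound (μ₁ μ₂ b x : ℝ) (hb : 0 < b) :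
    (1 / (2 * b)) * Real.exp (-|x - μ₁| / b) ≤
      Real.exp (|μ₁ - μ₂| / b) * ((1 / (2 * b)) * Real.exp (-|x - μ₂| / b)) := by
  rw [mul_left_comm]
  exact mul_le_mul_of_nonneg_left (exp_neg_abs_sub_div_le hb x) (by positivity)
end

section
/- Let f : X → ℝ be a function on a set X with finite sensitivity s, i.e., |f(x) − f(x')| ≤ s for all x, x' ∈ X, and let ε > 0. Then the Laplace mechanism F(x) = f(x) + Lap(s/ε) satisfies ε-local differential privacy: for all x, x' ∈ X and every point y ∈ ℝ, the density of the output distribution of F(x) at y is at most e^ε times the density of the output distribution of F(x') at y; equivalently, the density of the Laplace distribution with location f(x) and scale s/ε at y is at most e^ε times the density of the Laplace distribution with location f(x') and scale s/ε at y. -/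
open Real

/-- The Laplace mechanism with noise scale `s / ε` applied to a function `f` of sensitivity
at most `s` satisfies `ε`-local differential privacy at the level of output densities. -/
theorem laplace_mechanism_density_ldp {X : Type*} (f : X → ℝ) (s ε : ℝ)
    (hs : 0 < s) (hε : 0 < ε)
    (hsens : ∀ x x' : X, |f x - f x'| ≤ s) :
    ∀ x x' : X, ∀ y : ℝ,
      (1 / (2 * (s / ε))) * Real.exp (-|y - f x| / (s / ε)) ≤
        Real.exp ε * ((1 / (2 * (s / ε))) * Real.exp (-|y - f x'| / (s / ε))) := by
  intro x x' y
  have hb : 0 < s / ε := div_pos hs hε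
  have hkey : -|y - f x| / (s / ε) ≤ ε + -|y - f x'| / (s / ε) := by
    have h1 : |y - f x'| - |y - f x| ≤ s := by
      have := abs_sub_abs_le_abs_sub (y - f x') (y - f x)
      have h2 : |y - f x' - (y - f x)| = |f x - f x'| := by
        rw [show y - f x' - (y - f x) = f x - f x' by ring]
      linarith [hsens x x', h2 ▸ this]
    rw [div_le_iff₀ hb, add_mul, div_mul_cancel₀ _ (ne_of_gt hb)]
    have : ε * (s / ε) = s := by field_simp
    rw [this]; linarith
  calc (1 / (2 * (s / ε))) * Real.exp (-|y - f x| / (s / ε))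
      ≤ (1 / (2 * (s / ε))) * Real.exp (ε + -|y - f x'| / (s / ε)) := by
        apply mul_le_mul_of_nonneg_left (Real.exp_le_exp.mpr hkey)
        positivity
    _ = Real.exp ε * ((1 / (2 * (s / ε))) * Real.exp (-|y - f x'| / (s / ε))) := by
        rw [Real.exp_add]; ring
end

section
/- Let f : X → ℝ have sensitivity at most s, let ε > 0, and for each input x let μ_x be the Laplace distribution on ℝ with location f(x) and scale s/ε. Then for all x, x' ∈ X and every Borel measurable set S ⊆ ℝ, μ_x(S) ≤ e^ε · μ_{x'}(S). -/
open MeasureTheory Real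

/-- The Laplace distribution with location `μ` and scale `b`, as a measure on ℝ. -/
noncomputable def laplaceMeasure (μ b : ℝ) : Measure ℝ :=
  volume.withDensity (fun y => ENNReal.ofReal ((1 / (2 * b)) * Real.exp (-|y - μ| / b)))

/-- Measurable-set form of the `ε`-LDP guarantee of the Laplace mechanism. -/
theorem laplace_mechanism_measure_ldp {X : Type*} (f : X → ℝ) (s ε : ℝ)
    (hs : 0 < s) (hε : 0 < ε)
    (hsens : ∀ x x' : X, |f x - f x'| ≤ s) :
    ∀ x x' : X, ∀ S : Set ℝ, MeasurableSet S →
      laplaceMeasure (f x) (s / ε) S ≤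
        ENNReal.ofReal (Real.exp ε) * laplaceMeasure (f x') (s / ε) S := by
  intro x x' S hS
  have hb : 0 < s / ε := div_pos hs hε
  rw [laplaceMeasure, laplaceMeasure, withDensity_apply _ hS, withDensity_apply _ hS,
    ← lintegral_const_mul' _ _ ENNReal.ofReal_ne_top]
  refine lintegral_mono fun y => ?_
  rw [← ENNReal.ofReal_mul (Real.exp_nonneg _)]
  refine ENNReal.ofReal_le_ofReal ?_
  rw [mul_comm (Real.exp ε), mul_assoc, ← Real.exp_add]
  refine mul_le_mul_of_nonneg_left (Real.exp_le_exp.2 ?_) (by positivity)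
  rw [div_add' _ _ _ hb.ne', div_le_div_iff₀ hb hb]
  have h1 : |y - f x'| ≤ |y - f x| + s := by
    calc |y - f x'| = |(y - f x) + (f x - f x')| := by ring_nf
    _ ≤ |y - f x| + |f x - f x'| := abs_add_le _ _
    _ ≤ |y - f x| + s := by linarith [hsens x x']
  have : ε * (s / ε) = s := by field_simp
  nlinarith [abs_nonneg (y - f x)]
end
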